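/- Under conditions (G1) and (G2), the map F(y) = K1(|y|)·y is strictly monotone on bounded sets; quantitatively, Φ(y,y') ≥ (θ/(θ+1)) · K1(max{|y|,|y'|}) · |y'−y|² for all y, y' ∈ ℝ^d, where θ > 0 is the constant from condition (G2). In particular, for every R > 0 and all |y|, |y'| ≤ R one has Φ(y,y') ≥ c_R |y'−y|² with c_R = (θ/(θ+1))·K1(R) > 0. -/

import Mathlib

/-!
With `a = s_a g(s_a) ≤ b = s_b g(s_b)`, the scalar heart of the estimate is
`(K1 a - K1 b) a ≤ K1 b (b - a) / (θ + 1)`, which after clearing denominators reads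
`θ s_a (g(s_b) - g(s_a)) ≤ g(s_b) (s_b - s_a)`. This is the integrated form of (G2): the function
`u ↦ θ s_a g(u) - g(s_b) u` has derivative `θ s_a g'(u) - g(s_b) ≤ θ u g'(u) - g(u) ≤ 0` on
`(s_a, s_b)`. For vectors with `|y| ≤ |y'|` and `z = y' - y`,
`Φ(y, y') = K1(|y'|) |z|² + (K1(|y'|) - K1(|y|)) y·z`, and the scalar inequality together with
`|y'| - |y| ≤ |z|` bounds the cross term by `K1(|y'|) |z|² / (θ + 1)`.
-/

open Set
open scoped InnerProductSpace

section ScalarEstimates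

variable {g g' : ℝ → ℝ} {θ : ℝ}

theorem monotoneOn_Ici_of_hasDerivAt_nonneg (hg_cont : ContinuousOn g (Ici 0))
    (hg_deriv : ∀ s, 0 < s → HasDerivAt g (g' s) s) (hg'_nonneg : ∀ s, 0 < s → 0 ≤ g' s) :
    MonotoneOn g (Ici 0) :=
  monotoneOn_of_hasDerivWithinAt_nonneg (convex_Ici 0) hg_cont
    (fun s hs => (hg_deriv s (by simpa using hs)).hasDerivWithinAt)
    (fun s hs => hg'_nonneg s (by simpa using hs))

theorem mul_mul_sub_le_mul_sub_of_hasDerivAt (hg_cont : ContinuousOn g (Ici 0))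
    (hg_deriv : ∀ s, 0 < s → HasDerivAt g (g' s) s) (hg'_nonneg : ∀ s, 0 < s → 0 ≤ g' s)
    (hθ : 0 ≤ θ) (hG2 : ∀ s, 0 < s → θ * s * g' s ≤ g s) {s t : ℝ} (hs : 0 ≤ s) (hst : s ≤ t) :
    θ * s * (g t - g s) ≤ g t * (t - s) := by
  have hmono := monotoneOn_Ici_of_hasDerivAt_nonneg hg_cont hg_deriv hg'_nonneg
  have hanti : AntitoneOn (fun u => θ * s * g u - g t * u) (Icc s t) := by
    apply antitoneOn_of_hasDerivWithinAt_nonpos (convex_Icc s t)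
    · exact (continuousOn_const.mul (hg_cont.mono fun u hu => hs.trans hu.1)).sub
        (continuousOn_const.mul continuousOn_id)
    · intro u hu
      rw [interior_Icc] at hu
      exact (((hg_deriv u (hs.trans_lt hu.1)).const_mul _).sub
        ((hasDerivAt_id u).const_mul _)).hasDerivWithinAt
    · intro u hu
      rw [interior_Icc] at hu
      have hu0 : 0 < u := hs.trans_lt hu.1
      have hgu : g u ≤ g t := hmono hu0.le (hu0.le.trans hu.2.le) hu.2.le
      have hcoef : 0 ≤ θ * g' u * (u - s) :=
        mul_nonneg (mul_nonneg hθ (hg'_nonneg u hu0)) (sub_nonneg.2 hu.1.le)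
      nlinarith [hG2 u hu0]
  have := hanti (left_mem_Icc.2 hst) (right_mem_Icc.2 hst) hst
  linarith

theorem strictMonoOn_mul_of_monotoneOn_of_pos (hmono : MonotoneOn g (Ici 0))
    (hpos : ∀ s, 0 ≤ s → 0 < g s) : StrictMonoOn (fun s => s * g s) (Ici 0) :=
  fun x hx y hy hxy =>
    calc x * g x ≤ x * g y := mul_le_mul_of_nonneg_left (hmono hx hy hxy.le) hx
      _ < y * g y := mul_lt_mul_of_pos_right hxy (hpos y hy)

end ScalarEstimates

section ForchheimerCoefficient

variable {g sol K1 : ℝ → ℝ} {θ : ℝ}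

theorem monotoneOn_of_mul_apply_eq (hmono : MonotoneOn g (Ici 0))
    (hpos : ∀ s, 0 ≤ s → 0 < g s) (hsol : ∀ ξ, 0 ≤ ξ → (0 ≤ sol ξ ∧ sol ξ * g (sol ξ) = ξ)) :
    MonotoneOn sol (Ici 0) := by
  intro a ha b hb hab
  obtain ⟨hsa, hea⟩ := hsol a ha
  obtain ⟨hsb, heb⟩ := hsol b hb
  rw [← (strictMonoOn_mul_of_monotoneOn_of_pos hmono hpos).le_iff_le hsa hsb, hea, heb]
  exact hab

theorem antitoneOn_one_div_comp (hmono : MonotoneOn g (Ici 0))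
    (hpos : ∀ s, 0 ≤ s → 0 < g s) (hsol : ∀ ξ, 0 ≤ ξ → (0 ≤ sol ξ ∧ sol ξ * g (sol ξ) = ξ))
    (hK1 : ∀ ξ, 0 ≤ ξ → K1 ξ = 1 / g (sol ξ)) :
    AntitoneOn K1 (Ici 0) := by
  intro a ha b hb hab
  have hs := monotoneOn_of_mul_apply_eq hmono hpos hsol ha hb hab
  rw [hK1 a ha, hK1 b hb]
  exact one_div_le_one_div_of_le (hpos _ (hsol a ha).1) (hmono (hsol a ha).1 (hsol b hb).1 hs)

theorem sub_mul_le_of_mul_mul_sub_le (hmono : MonotoneOn g (Ici 0))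
    (hpos : ∀ s, 0 ≤ s → 0 < g s) (hθ : 0 ≤ θ)
    (hkey : ∀ s t, 0 ≤ s → s ≤ t → θ * s * (g t - g s) ≤ g t * (t - s))
    (hsol : ∀ ξ, 0 ≤ ξ → (0 ≤ sol ξ ∧ sol ξ * g (sol ξ) = ξ))
    (hK1 : ∀ ξ, 0 ≤ ξ → K1 ξ = 1 / g (sol ξ)) {a b : ℝ} (ha : 0 ≤ a) (hab : a ≤ b) :
    (K1 a - K1 b) * a ≤ 1 / (θ + 1) * K1 b * (b - a) := by
  have hb := ha.trans hab
  have hs := monotoneOn_of_mul_apply_eq hmono hpos hsol ha hb hab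
  obtain ⟨hsa, hea⟩ := hsol a ha
  obtain ⟨hsb, heb⟩ := hsol b hb
  have hga := hpos _ hsa
  have hgb := hpos _ hsb
  have h := hkey _ _ hsa hs
  rw [hK1 a ha, hK1 b hb]
  generalize sol a = sa at *
  generalize sol b = sb at *
  subst hea heb
  have hθ1 : 0 < θ + 1 := by linarith
  rw [← sub_nonneg]
  have hdiff : 1 / (θ + 1) * (1 / g sb) * (sb * g sb - sa * g sa)
      - (1 / g sa - 1 / g sb) * (sa * g sa)
      = (g sb * (sb - sa) - θ * sa * (g sb - g sa)) / ((θ + 1) * g sb) := by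
    field_simp
    ring
  rw [hdiff]
  exact div_nonneg (by linarith) (by positivity)

end ForchheimerCoefficient

section InnerProduct

variable {E : Type*} [NormedAddCommGroup E] [InnerProductSpace ℝ E]

theorem one_sub_mul_mul_norm_sub_sq_le_inner {ka kb c : ℝ} {y y' : E} (hk : kb ≤ ka)
    (hc : 0 ≤ c * kb) (hkey : (ka - kb) * ‖y‖ ≤ c * kb * (‖y'‖ - ‖y‖)) :
    (1 - c) * kb * ‖y' - y‖ ^ 2 ≤ ⟪kb • y' - ka • y, y' - y⟫_ℝ := by
  set z := y' - y
  have hexpand : ⟪kb • y' - ka • y, z⟫_ℝ = kb * ‖z‖ ^ 2 + (kb - ka) * ⟪y, z⟫_ℝ := by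
    rw [show y' = z + y by simp [z], inner_sub_left, real_inner_smul_left, real_inner_smul_left,
      inner_add_left, real_inner_self_eq_norm_sq]
    ring
  have hcross : (ka - kb) * ⟪y, z⟫_ℝ ≤ (ka - kb) * (‖y‖ * ‖z‖) :=
    mul_le_mul_of_nonneg_left (real_inner_le_norm y z) (sub_nonneg.2 hk)
  have hgap : c * kb * (‖y'‖ - ‖y‖) * ‖z‖ ≤ c * kb * ‖z‖ ^ 2 := by
    rw [sq, ← mul_assoc]
    exact mul_le_mul_of_nonneg_right
      (mul_le_mul_of_nonneg_left (norm_sub_norm_le y' y) hc) (norm_nonneg z)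
  have := mul_le_mul_of_nonneg_right hkey (norm_nonneg z)
  rw [hexpand]
  nlinarith

theorem mul_mul_norm_sub_sq_le_inner_of_antitoneOn {k : ℝ → ℝ} {c : ℝ}
    (hanti : AntitoneOn k (Ici 0)) (hk : ∀ ξ, 0 ≤ ξ → 0 ≤ k ξ) (hc : 0 ≤ c)
    (hkey : ∀ a b, 0 ≤ a → a ≤ b → (k a - k b) * a ≤ c * k b * (b - a)) (y y' : E) :
    (1 - c) * k (max ‖y‖ ‖y'‖) * ‖y' - y‖ ^ 2 ≤ ⟪k ‖y'‖ • y' - k ‖y‖ • y, y' - y⟫_ℝ := by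
  wlog h : ‖y‖ ≤ ‖y'‖ generalizing y y'
  · rw [← inner_neg_neg, neg_sub, neg_sub, max_comm, norm_sub_rev]
    exact this y' y (le_of_not_ge h)
  rw [max_eq_right h]
  exact one_sub_mul_mul_norm_sub_sq_le_inner (hanti (norm_nonneg y) (norm_nonneg y') h)
    (mul_nonneg hc (hk _ (norm_nonneg y'))) (hkey _ _ (norm_nonneg y) h)

end InnerProduct

theorem forchheimer_map_strictly_monotone_on_bounded_sets_general
    (d : ℕ)
    (g g' sol K1 : ℝ → ℝ) (θ : ℝ)
    -- condition (G1)
    (hg_cont : ContinuousOn g (Set.Ici 0))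
    (hg_deriv : ∀ s, 0 < s → HasDerivAt g (g' s) s)
    (hg'_nonneg : ∀ s, 0 < s → 0 ≤ g' s)
    (hg0 : 0 < g 0)
    -- condition (G2)
    (hθ : 0 < θ)
    (hG2 : ∀ s, 0 < s → θ * s * g' s ≤ g s)
    -- the implicit function s(ξ): the unique nonnegative solution of s·g(s) = ξ
    (hsol : ∀ ξ, 0 ≤ ξ → (0 ≤ sol ξ ∧ sol ξ * g (sol ξ) = ξ))
    -- the Forchheimer coefficient
    (hK1 : ∀ ξ, 0 ≤ ξ → K1 ξ = 1 / g (sol ξ)) :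
    (∀ y y' : EuclideanSpace ℝ (Fin d),
      θ / (θ + 1) * K1 (max ‖y‖ ‖y'‖) * ‖y' - y‖ ^ 2 ≤
        (inner ℝ (K1 ‖y'‖ • y' - K1 ‖y‖ • y) (y' - y) : ℝ)) ∧
    (∀ R : ℝ, 0 < R →
      0 < θ / (θ + 1) * K1 R ∧
      ∀ y y' : EuclideanSpace ℝ (Fin d), ‖y‖ ≤ R → ‖y'‖ ≤ R →
        θ / (θ + 1) * K1 R * ‖y' - y‖ ^ 2 ≤
          (inner ℝ (K1 ‖y'‖ • y' - K1 ‖y‖ • y) (y' - y) : ℝ)) := by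
  have hmono := monotoneOn_Ici_of_hasDerivAt_nonneg hg_cont hg_deriv hg'_nonneg
  have hpos : ∀ s, 0 ≤ s → 0 < g s := fun s hs => hg0.trans_le (hmono self_mem_Ici hs hs)
  have hK1_pos : ∀ ξ, 0 ≤ ξ → 0 < K1 ξ := fun ξ hξ => by
    rw [hK1 ξ hξ]
    exact one_div_pos.2 (hpos _ (hsol ξ hξ).1)
  have hK1_anti := antitoneOn_one_div_comp hmono hpos hsol hK1
  have hbound (y y' : EuclideanSpace ℝ (Fin d)) :
      θ / (θ + 1) * K1 (max ‖y‖ ‖y'‖) * ‖y' - y‖ ^ 2 ≤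
        (inner ℝ (K1 ‖y'‖ • y' - K1 ‖y‖ • y) (y' - y) : ℝ) := by
    have := mul_mul_norm_sub_sq_le_inner_of_antitoneOn hK1_anti (fun ξ hξ => (hK1_pos ξ hξ).le)
      (by positivity)
      (fun a b ha hab => sub_mul_le_of_mul_mul_sub_le hmono hpos hθ.le
        (fun s t hs hst =>
          mul_mul_sub_le_mul_sub_of_hasDerivAt hg_cont hg_deriv hg'_nonneg hθ.le hG2 hs hst)
        hsol hK1 ha hab) y y'
    rwa [one_sub_div (by positivity), add_sub_cancel_right] at this
  refine ⟨hbound, fun R hR => ⟨mul_pos (by positivity) (hK1_pos R hR.le), fun y y' hy hy' => ?_⟩⟩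
  refine le_trans ?_ (hbound y y')
  gcongr
  exact hK1_anti (le_max_of_le_left (norm_nonneg y)) hR.le (max_le hy hy')

/-- Under conditions (G1) and (G2), `F(y) = K1(|y|)·y` is strictly monotone on bounded
sets: `Φ(y,y') ≥ (θ/(θ+1))·K1(max{|y|,|y'|})·|y'−y|²`, and in particular on every ball
of radius `R` one has `Φ(y,y') ≥ c_R·|y'−y|²` with `c_R = (θ/(θ+1))·K1(R) > 0`
(Proposition III.6 of Aulisa et al.). -/
theorem forchheimer_map_strictly_monotone_on_bounded_sets
    (d : ℕ) (hd : 1 ≤ d)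
    (g g' sol K1 : ℝ → ℝ) (θ : ℝ)
    -- condition (G1)
    (hg_cont : ContinuousOn g (Set.Ici 0))
    (hg_deriv : ∀ s, 0 < s → HasDerivAt g (g' s) s)
    (hg'_cont : ContinuousOn g' (Set.Ioi 0))
    (hg'_nonneg : ∀ s, 0 < s → 0 ≤ g' s)
    (hg0 : 0 < g 0)
    -- condition (G2)
    (hθ : 0 < θ)
    (hG2 : ∀ s, 0 < s → θ * s * g' s ≤ g s)
    -- the implicit function s(ξ): the unique nonnegative solution of s·g(s) = ξ
    (hsol : ∀ ξ, 0 ≤ ξ → (0 ≤ sol ξ ∧ sol ξ * g (sol ξ) = ξ))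
    -- the Forchheimer coefficient
    (hK1 : ∀ ξ, 0 ≤ ξ → K1 ξ = 1 / g (sol ξ)) :
    (∀ y y' : EuclideanSpace ℝ (Fin d),
      θ / (θ + 1) * K1 (max ‖y‖ ‖y'‖) * ‖y' - y‖ ^ 2 ≤
        (inner ℝ (K1 ‖y'‖ • y' - K1 ‖y‖ • y) (y' - y) : ℝ)) ∧
    (∀ R : ℝ, 0 < R →
      0 < θ / (θ + 1) * K1 R ∧
      ∀ y y' : EuclideanSpace ℝ (Fin d), ‖y‖ ≤ R → ‖y'‖ ≤ R →
        θ / (θ + 1) * K1 R * ‖y' - y‖ ^ 2 ≤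
          (inner ℝ (K1 ‖y'‖ • y' - K1 ‖y‖ • y) (y' - y) : ℝ)) :=
  forchheimer_map_strictly_monotone_on_bounded_sets_general d g g' sol K1 θ hg_cont hg_deriv
    hg'_nonneg hg0 hθ hG2 hsol hK1
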